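/- arXiv:2601.14202 — 4 statements merged into one kernel-verified Lean document; each statement's English description precedes it below -/
import Mathlib

section
/- Fix a field F. There exists a decoding function D : F^12 → F^4, depending only on F, such that for all message symbols a_1,a_2,a_3,a_4,b_1,b_2,b_3,b_4 ∈ F and all noise symbols N_1(i,j), N_2(i,j) ∈ F (i ∈ {1,2}, j ∈ {1,2,3,4}), applying D to the twelve answer symbols of retrieval scheme 1 for message W_1, namely (a_1+N_1(1,1), b_1+N_1(2,1), a_2+b_2+N_1(1,2)+N_1(2,2)) from server 1, (a_4+N_2(1,4), b_2+N_2(2,2), a_3+b_1+N_2(1,3)+N_2(2,1)) from server 2, (N_1(1,1), N_1(2,1), N_1(1,2)+N_1(2,2)) from server 3, and (N_2(1,4), N_2(2,2), N_2(1,3)+N_2(2,1)) from server 4, returns exactly (a_1, a_2, a_3, a_4). Hence retrieval scheme 1 correctly retrieves W_1. -/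
/-- Correctness of retrieval scheme 1 for message `W₁` in the `N = 4`, `K = 2`
A-XPIR scheme: there is a decoding function `D : F^12 → F^4` (depending only on
the field `F`) that recovers `(a₁, a₂, a₃, a₄)` from the twelve answer symbols.
Here `a i`, `b i` (indices `0,…,3` standing for `1,…,4`) are the symbols of the
messages `W₁`, `W₂`, and `N1 i j`, `N2 i j` (with `i ∈ {0,1}` standing for
`i ∈ {1,2}` and `j ∈ {0,…,3}` standing for `j ∈ {1,…,4}`) are the noise symbols
`N_1(i,j)`, `N_2(i,j)`. -/
theorem scheme1_retrieves_W1 (F : Type*) [Field F] :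
    ∃ D : (Fin 12 → F) → (Fin 4 → F),
      ∀ (a b : Fin 4 → F) (N1 N2 : Fin 2 → Fin 4 → F),
        D ![a 0 + N1 0 0, b 0 + N1 1 0, a 1 + b 1 + N1 0 1 + N1 1 1,
            a 3 + N2 0 3, b 1 + N2 1 1, a 2 + b 0 + N2 0 2 + N2 1 0,
            N1 0 0, N1 1 0, N1 0 1 + N1 1 1,
            N2 0 3, N2 1 1, N2 0 2 + N2 1 0] = a := by
  refine ⟨fun v => ![v 0 - v 6, v 2 - v 8 - (v 4 - v 10),
    v 5 - v 11 - (v 1 - v 7), v 3 - v 9], ?_⟩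
  intro a b N1 N2
  funext i
  fin_cases i
  · show a 0 + N1 0 0 - N1 0 0 = a 0; ring
  · show a 1 + b 1 + N1 0 1 + N1 1 1 - (N1 0 1 + N1 1 1) - (b 1 + N2 1 1 - N2 1 1) = a 1; ring
  · show a 2 + b 0 + N2 0 2 + N2 1 0 - (N2 0 2 + N2 1 0) - (b 0 + N1 1 0 - N1 1 0) = a 2; ring
  · show a 3 + N2 0 3 - N2 0 3 = a 3; ring
end

section
/- Fix a field F. There exists a decoding function D : F^12 → F^4, depending only on F, such that for all message symbols a_1,...,a_4, b_1,...,b_4 ∈ F and all noise symbols N_1(i,j), N_2(i,j) ∈ F, applying D to the twelve answer symbols of retrieval scheme 1 for message W_2, namely (a_1+N_1(1,1), b_1+N_1(2,1), a_2+b_2+N_1(1,2)+N_1(2,2)) from server 1, (a_2+N_2(1,2), b_4+N_2(2,4), a_1+b_3+N_2(1,1)+N_2(2,3)) from server 2, (N_1(1,1), N_1(2,1), N_1(1,2)+N_1(2,2)) from server 3, and (N_2(1,2), N_2(2,4), N_2(1,1)+N_2(2,3)) from server 4, returns exactly (b_1, b_2, b_3, b_4). Hence retrieval scheme 1 correctly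 retrieves W_2. -/
/-- Correctness of retrieval scheme 1 for message `W₂` in the `N = 4`, `K = 2`
A-XPIR scheme: there is a decoding function `D : F^12 → F^4` (depending only on
the field `F`) that recovers `(b₁, b₂, b₃, b₄)` from the twelve answer symbols.
Here `a i`, `b i` (indices `0,…,3` standing for `1,…,4`) are the symbols of the
messages `W₁`, `W₂`, and `N1 i j`, `N2 i j` (with `i ∈ {0,1}` standing for
`i ∈ {1,2}` and `j ∈ {0,…,3}` standing for `j ∈ {1,…,4}`) are the noise symbols
`N_1(i,j)`, `N_2(i,j)`. -/
theorem scheme1_retrieves_W2 (F : Type*) [Field F] :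
    ∃ D : (Fin 12 → F) → (Fin 4 → F),
      ∀ (a b : Fin 4 → F) (N1 N2 : Fin 2 → Fin 4 → F),
        D ![a 0 + N1 0 0, b 0 + N1 1 0, a 1 + b 1 + N1 0 1 + N1 1 1,
            a 1 + N2 0 1, b 3 + N2 1 3, a 0 + b 2 + N2 0 0 + N2 1 2,
            N1 0 0, N1 1 0, N1 0 1 + N1 1 1,
            N2 0 1, N2 1 3, N2 0 0 + N2 1 2] = b := by
  refine ⟨fun y => ![y 1 - y 7, y 2 - (y 3 - y 9) - y 8, y 5 - (y 0 - y 6) - y 11, y 4 - y 10], ?_⟩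
  intro a b N1 N2
  funext i
  fin_cases i
  · show (b 0 + N1 1 0) - N1 1 0 = b 0; ring
  · show (a 1 + b 1 + N1 0 1 + N1 1 1) - ((a 1 + N2 0 1) - N2 0 1) - (N1 0 1 + N1 1 1) = b 1
    ring
  · show (a 0 + b 2 + N2 0 0 + N2 1 2) - ((a 0 + N1 0 0) - N1 0 0) - (N2 0 0 + N2 1 2) = b 2
    ring
  · show (b 3 + N2 1 3) - N2 1 3 = b 3; ring
end

section
/- Fix a field F. There exists a decoding function D : F^12 → F^4, depending only on F, such that for all message symbols a_1,...,a_4, b_1,...,b_4 ∈ F and all noise symbols N_1(i,j), N_2(i,j) ∈ F, applying D to the twelve answer symbols of retrieval scheme 2 for message W_2, namely (a_3+N_1(1,3), b_3+N_1(2,3), a_4+b_4+N_1(1,4)+N_1(2,4)) from server 1, (a_4+N_2(1,4), b_2+N_2(2,2), a_3+b_1+N_2(1,3)+N_2(2,1)) from server 2, (N_1(1,3), N_1(2,3), N_1(1,4)+N_1(2,4)) from server 3, and (N_2(1,4), N_2(2,2), N_2(1,3)+N_2(2,1)) from server 4, returns exactly (b_1, b_2, b_3, b_4). Hence retrieval scheme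 2 correctly retrieves W_2. -/
section
variable {α : Type*} (c0 c1 c2 c3 c4 c5 c6 c7 c8 c9 c10 c11 : α)

private lemma vec12_app0 : ![c0, c1, c2, c3, c4, c5, c6, c7, c8, c9, c10, c11] (0 : Fin 12) = c0 := rfl
private lemma vec12_app1 : ![c0, c1, c2, c3, c4, c5, c6, c7, c8, c9, c10, c11] (1 : Fin 12) = c1 := rfl
private lemma vec12_app2 : ![c0, c1, c2, c3, c4, c5, c6, c7, c8, c9, c10, c11] (2 : Fin 12) = c2 := rfl
private lemma vec12_app3 : ![c0, c1, c2, c3, c4, c5, c6, c7, c8, c9, c10, c11] (3 : Fin 12) = c3 := rfl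
private lemma vec12_app4 : ![c0, c1, c2, c3, c4, c5, c6, c7, c8, c9, c10, c11] (4 : Fin 12) = c4 := rfl
private lemma vec12_app5 : ![c0, c1, c2, c3, c4, c5, c6, c7, c8, c9, c10, c11] (5 : Fin 12) = c5 := rfl
private lemma vec12_app6 : ![c0, c1, c2, c3, c4, c5, c6, c7, c8, c9, c10, c11] (6 : Fin 12) = c6 := rfl
private lemma vec12_app7 : ![c0, c1, c2, c3, c4, c5, c6, c7, c8, c9, c10, c11] (7 : Fin 12) = c7 := rfl
private lemma vec12_app8 : ![c0, c1, c2, c3, c4, c5, c6, c7, c8, c9, c10, c11] (8 : Fin 12) = c8 := rfl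
private lemma vec12_app9 : ![c0, c1, c2, c3, c4, c5, c6, c7, c8, c9, c10, c11] (9 : Fin 12) = c9 := rfl
private lemma vec12_app10 : ![c0, c1, c2, c3, c4, c5, c6, c7, c8, c9, c10, c11] (10 : Fin 12) = c10 := rfl
private lemma vec12_app11 : ![c0, c1, c2, c3, c4, c5, c6, c7, c8, c9, c10, c11] (11 : Fin 12) = c11 := rfl

private lemma vec4_mk0 {α : Type*} (c0 c1 c2 c3 : α) (h : (0:ℕ) < 4) :
    ![c0, c1, c2, c3] ⟨0, h⟩ = c0 := rfl
private lemma vec4_mk1 {α : Type*} (c0 c1 c2 c3 : α) (h : (1:ℕ) < 4) :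
    ![c0, c1, c2, c3] ⟨1, h⟩ = c1 := rfl
private lemma vec4_mk2 {α : Type*} (c0 c1 c2 c3 : α) (h : (2:ℕ) < 4) :
    ![c0, c1, c2, c3] ⟨2, h⟩ = c2 := rfl
private lemma vec4_mk3 {α : Type*} (c0 c1 c2 c3 : α) (h : (3:ℕ) < 4) :
    ![c0, c1, c2, c3] ⟨3, h⟩ = c3 := rfl

private lemma fin4_mk2 (h : (2:ℕ) < 4) : (⟨2, h⟩ : Fin 4) = 2 := rfl
private lemma fin4_mk3 (h : (3:ℕ) < 4) : (⟨3, h⟩ : Fin 4) = 3 := rfl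

end

/-- Correctness of retrieval scheme 2 for message `W₂` in the `N = 4`, `K = 2`
A-XPIR scheme: there is a decoding function `D : F^12 → F^4` (depending only on
the field `F`) that recovers `(b₁, b₂, b₃, b₄)` from the twelve answer symbols.
Here `a i`, `b i` (indices `0,…,3` standing for `1,…,4`) are the symbols of the
messages `W₁`, `W₂`, and `N1 i j`, `N2 i j` (with `i ∈ {0,1}` standing for
`i ∈ {1,2}` and `j ∈ {0,…,3}` standing for `j ∈ {1,…,4}`) are the noise symbols
`N_1(i,j)`, `N_2(i,j)`. -/
theorem scheme2_retrieves_W2 (F : Type*) [Field F] :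
    ∃ D : (Fin 12 → F) → (Fin 4 → F),
      ∀ (a b : Fin 4 → F) (N1 N2 : Fin 2 → Fin 4 → F),
        D ![a 2 + N1 0 2, b 2 + N1 1 2, a 3 + b 3 + N1 0 3 + N1 1 3,
            a 3 + N2 0 3, b 1 + N2 1 1, a 2 + b 0 + N2 0 2 + N2 1 0,
            N1 0 2, N1 1 2, N1 0 3 + N1 1 3,
            N2 0 3, N2 1 1, N2 0 2 + N2 1 0] = b := by
  refine ⟨fun x => ![x 5 - (x 0 - x 6) - x 11, x 4 - x 10, x 1 - x 7,
    x 2 - (x 3 - x 9) - x 8], ?_⟩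
  intro a b N1 N2
  funext i
  fin_cases i <;>
    simp only [vec12_app0, vec12_app1, vec12_app2, vec12_app3, vec12_app4, vec12_app5,
      vec12_app6, vec12_app7, vec12_app8, vec12_app9, vec12_app10, vec12_app11,
      Matrix.cons_val_zero, Matrix.cons_val_one, Matrix.head_cons, Matrix.cons_val_two,
      Matrix.cons_val_three, Matrix.tail_cons, Fin.mk_zero, Fin.mk_one,
      vec4_mk0, vec4_mk1, vec4_mk2, vec4_mk3, fin4_mk2, fin4_mk3] <;>
    first | rfl | ring
end

section
/- Let F be a finite field. For every fixed message assignment w = (a_1,...,a_4,b_1,...,b_4) ∈ F^8, the map from the noise space F^16 (the symbols N_1(i,j) and N_2(i,j), i ∈ {1,2}, j ∈ {1,2,3,4}) to F^12 sending (N_1, N_2) to the joint stored vector (S_1, S_2), where S_1 = (a_1+N_1(1,1), a_3+N_1(1,3), b_1+N_1(2,1), b_3+N_1(2,3), a_2+b_2+N_1(1,2)+N_1(2,2), a_4+b_4+N_1(1,4)+N_1(2,4)) and S_2 = (a_2+N_2(1,2), a_4+N_2(1,4), b_2+N_2(2,2), b_4+N_2(2,4), a_1+b_3+N_2(1,1)+N_2(2,3),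 a_3+b_1+N_2(1,3)+N_2(2,1)), is surjective and every fiber has exactly |F|^4 elements; consequently, the pushforward of the uniform distribution on F^16 under this map is the uniform distribution on F^12, for every message assignment w. In particular, the joint distribution of the storages of the communicating servers 1 and 2 under uniform noise is the same for all message assignments, so the communicating pair {1,2} learns nothing about the messages. -/
open scoped ENNReal

/-- The joint storage `(S₁, S₂)` of the communicating servers 1 and 2 in the
`N = 4`, `K = 2` A-XPIR scheme, as a function of the noise pair
`N = (N₁, N₂)` (where `N.1 i j` stands for `N_1(i+1, j+1)` and `N.2 i j` for
`N_2(i+1, j+1)`), for messages `W₁ = (a 0, …, a 3)`, `W₂ = (b 0, …, b 3)`: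
`S₁ = (a₁+N₁(1,1), a₃+N₁(1,3), b₁+N₁(2,1), b₃+N₁(2,3),
a₂+b₂+N₁(1,2)+N₁(2,2), a₄+b₄+N₁(1,4)+N₁(2,4))` and
`S₂ = (a₂+N₂(1,2), a₄+N₂(1,4), b₂+N₂(2,2), b₄+N₂(2,4),
a₁+b₃+N₂(1,1)+N₂(2,3), a₃+b₁+N₂(1,3)+N₂(2,1))`. -/
def store12 (F : Type*) [Field F] (a b : Fin 4 → F)
    (N : (Fin 2 → Fin 4 → F) × (Fin 2 → Fin 4 → F)) : Fin 12 → F :=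
  ![a 0 + N.1 0 0, a 2 + N.1 0 2, b 0 + N.1 1 0, b 2 + N.1 1 2,
    a 1 + b 1 + N.1 0 1 + N.1 1 1, a 3 + b 3 + N.1 0 3 + N.1 1 3,
    a 1 + N.2 0 1, a 3 + N.2 0 3, b 1 + N.2 1 1, b 3 + N.2 1 3,
    a 0 + b 2 + N.2 0 0 + N.2 1 2, a 2 + b 0 + N.2 0 2 + N.2 1 0]

private lemma axpir_v12_0 {α : Type*} (x0 x1 x2 x3 x4 x5 x6 x7 x8 x9 x10 x11 : α) : ![x0, x1, x2, x3, x4, x5, x6, x7, x8, x9, x10, x11] (0 : Fin 12) = x0 := rfl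
private lemma axpir_v12_0' {α : Type*} (x0 x1 x2 x3 x4 x5 x6 x7 x8 x9 x10 x11 : α) (h : 0 < 12) : ![x0, x1, x2, x3, x4, x5, x6, x7, x8, x9, x10, x11] (⟨0, h⟩ : Fin 12) = x0 := rfl
private lemma axpir_v12_1 {α : Type*} (x0 x1 x2 x3 x4 x5 x6 x7 x8 x9 x10 x11 : α) : ![x0, x1, x2, x3, x4, x5, x6, x7, x8, x9, x10, x11] (1 : Fin 12) = x1 := rfl
private lemma axpir_v12_1' {α : Type*} (x0 x1 x2 x3 x4 x5 x6 x7 x8 x9 x10 x11 : α) (h : 1 < 12) : ![x0, x1, x2, x3, x4, x5, x6, x7, x8, x9, x10, x11] (⟨1, h⟩ : Fin 12) = x1 := rfl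
private lemma axpir_v12_2 {α : Type*} (x0 x1 x2 x3 x4 x5 x6 x7 x8 x9 x10 x11 : α) : ![x0, x1, x2, x3, x4, x5, x6, x7, x8, x9, x10, x11] (2 : Fin 12) = x2 := rfl
private lemma axpir_v12_2' {α : Type*} (x0 x1 x2 x3 x4 x5 x6 x7 x8 x9 x10 x11 : α) (h : 2 < 12) : ![x0, x1, x2, x3, x4, x5, x6, x7, x8, x9, x10, x11] (⟨2, h⟩ : Fin 12) = x2 := rfl
private lemma axpir_v12_3 {α : Type*} (x0 x1 x2 x3 x4 x5 x6 x7 x8 x9 x10 x11 : α) : ![x0, x1, x2, x3, x4, x5, x6, x7, x8, x9, x10, x11] (3 : Fin 12) = x3 := rfl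
private lemma axpir_v12_3' {α : Type*} (x0 x1 x2 x3 x4 x5 x6 x7 x8 x9 x10 x11 : α) (h : 3 < 12) : ![x0, x1, x2, x3, x4, x5, x6, x7, x8, x9, x10, x11] (⟨3, h⟩ : Fin 12) = x3 := rfl
private lemma axpir_v12_4 {α : Type*} (x0 x1 x2 x3 x4 x5 x6 x7 x8 x9 x10 x11 : α) : ![x0, x1, x2, x3, x4, x5, x6, x7, x8, x9, x10, x11] (4 : Fin 12) = x4 := rfl
private lemma axpir_v12_4' {α : Type*} (x0 x1 x2 x3 x4 x5 x6 x7 x8 x9 x10 x11 : α) (h : 4 < 12) : ![x0, x1, x2, x3, x4, x5, x6, x7, x8, x9, x10, x11] (⟨4, h⟩ : Fin 12) = x4 := rfl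
private lemma axpir_v12_5 {α : Type*} (x0 x1 x2 x3 x4 x5 x6 x7 x8 x9 x10 x11 : α) : ![x0, x1, x2, x3, x4, x5, x6, x7, x8, x9, x10, x11] (5 : Fin 12) = x5 := rfl
private lemma axpir_v12_5' {α : Type*} (x0 x1 x2 x3 x4 x5 x6 x7 x8 x9 x10 x11 : α) (h : 5 < 12) : ![x0, x1, x2, x3, x4, x5, x6, x7, x8, x9, x10, x11] (⟨5, h⟩ : Fin 12) = x5 := rfl
private lemma axpir_v12_6 {α : Type*} (x0 x1 x2 x3 x4 x5 x6 x7 x8 x9 x10 x11 : α) : ![x0, x1, x2, x3, x4, x5, x6, x7, x8, x9, x10, x11] (6 : Fin 12) = x6 := rfl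
private lemma axpir_v12_6' {α : Type*} (x0 x1 x2 x3 x4 x5 x6 x7 x8 x9 x10 x11 : α) (h : 6 < 12) : ![x0, x1, x2, x3, x4, x5, x6, x7, x8, x9, x10, x11] (⟨6, h⟩ : Fin 12) = x6 := rfl
private lemma axpir_v12_7 {α : Type*} (x0 x1 x2 x3 x4 x5 x6 x7 x8 x9 x10 x11 : α) : ![x0, x1, x2, x3, x4, x5, x6, x7, x8, x9, x10, x11] (7 : Fin 12) = x7 := rfl
private lemma axpir_v12_7' {α : Type*} (x0 x1 x2 x3 x4 x5 x6 x7 x8 x9 x10 x11 : α) (h : 7 < 12) : ![x0, x1, x2, x3, x4, x5, x6, x7, x8, x9, x10, x11] (⟨7, h⟩ : Fin 12) = x7 := rfl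
private lemma axpir_v12_8 {α : Type*} (x0 x1 x2 x3 x4 x5 x6 x7 x8 x9 x10 x11 : α) : ![x0, x1, x2, x3, x4, x5, x6, x7, x8, x9, x10, x11] (8 : Fin 12) = x8 := rfl
private lemma axpir_v12_8' {α : Type*} (x0 x1 x2 x3 x4 x5 x6 x7 x8 x9 x10 x11 : α) (h : 8 < 12) : ![x0, x1, x2, x3, x4, x5, x6, x7, x8, x9, x10, x11] (⟨8, h⟩ : Fin 12) = x8 := rfl
private lemma axpir_v12_9 {α : Type*} (x0 x1 x2 x3 x4 x5 x6 x7 x8 x9 x10 x11 : α) : ![x0, x1, x2, x3, x4, x5, x6, x7, x8, x9, x10, x11] (9 : Fin 12) = x9 := rfl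
private lemma axpir_v12_9' {α : Type*} (x0 x1 x2 x3 x4 x5 x6 x7 x8 x9 x10 x11 : α) (h : 9 < 12) : ![x0, x1, x2, x3, x4, x5, x6, x7, x8, x9, x10, x11] (⟨9, h⟩ : Fin 12) = x9 := rfl
private lemma axpir_v12_10 {α : Type*} (x0 x1 x2 x3 x4 x5 x6 x7 x8 x9 x10 x11 : α) : ![x0, x1, x2, x3, x4, x5, x6, x7, x8, x9, x10, x11] (10 : Fin 12) = x10 := rfl
private lemma axpir_v12_10' {α : Type*} (x0 x1 x2 x3 x4 x5 x6 x7 x8 x9 x10 x11 : α) (h : 10 < 12) : ![x0, x1, x2, x3, x4, x5, x6, x7, x8, x9, x10, x11] (⟨10, h⟩ : Fin 12) = x10 := rfl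
private lemma axpir_v12_11 {α : Type*} (x0 x1 x2 x3 x4 x5 x6 x7 x8 x9 x10 x11 : α) : ![x0, x1, x2, x3, x4, x5, x6, x7, x8, x9, x10, x11] (11 : Fin 12) = x11 := rfl
private lemma axpir_v12_11' {α : Type*} (x0 x1 x2 x3 x4 x5 x6 x7 x8 x9 x10 x11 : α) (h : 11 < 12) : ![x0, x1, x2, x3, x4, x5, x6, x7, x8, x9, x10, x11] (⟨11, h⟩ : Fin 12) = x11 := rfl
private lemma axpir_v4_0 {α : Type*} (x0 x1 x2 x3 : α) : ![x0, x1, x2, x3] (0 : Fin 4) = x0 := rfl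
private lemma axpir_v4_0' {α : Type*} (x0 x1 x2 x3 : α) (h : 0 < 4) : ![x0, x1, x2, x3] (⟨0, h⟩ : Fin 4) = x0 := rfl
private lemma axpir_v4_1 {α : Type*} (x0 x1 x2 x3 : α) : ![x0, x1, x2, x3] (1 : Fin 4) = x1 := rfl
private lemma axpir_v4_1' {α : Type*} (x0 x1 x2 x3 : α) (h : 1 < 4) : ![x0, x1, x2, x3] (⟨1, h⟩ : Fin 4) = x1 := rfl
private lemma axpir_v4_2 {α : Type*} (x0 x1 x2 x3 : α) : ![x0, x1, x2, x3] (2 : Fin 4) = x2 := rfl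
private lemma axpir_v4_2' {α : Type*} (x0 x1 x2 x3 : α) (h : 2 < 4) : ![x0, x1, x2, x3] (⟨2, h⟩ : Fin 4) = x2 := rfl
private lemma axpir_v4_3 {α : Type*} (x0 x1 x2 x3 : α) : ![x0, x1, x2, x3] (3 : Fin 4) = x3 := rfl
private lemma axpir_v4_3' {α : Type*} (x0 x1 x2 x3 : α) (h : 3 < 4) : ![x0, x1, x2, x3] (⟨3, h⟩ : Fin 4) = x3 := rfl
private lemma axpir_v2_0 {α : Type*} (x0 x1 : α) : ![x0, x1] (0 : Fin 2) = x0 := rfl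
private lemma axpir_v2_0' {α : Type*} (x0 x1 : α) (h : 0 < 2) : ![x0, x1] (⟨0, h⟩ : Fin 2) = x0 := rfl
private lemma axpir_v2_1 {α : Type*} (x0 x1 : α) : ![x0, x1] (1 : Fin 2) = x1 := rfl
private lemma axpir_v2_1' {α : Type*} (x0 x1 : α) (h : 1 < 2) : ![x0, x1] (⟨1, h⟩ : Fin 2) = x1 := rfl

attribute [local simp] axpir_v12_0 axpir_v12_1 axpir_v12_2 axpir_v12_3 axpir_v12_4
  axpir_v12_5 axpir_v12_6 axpir_v12_7 axpir_v12_8 axpir_v12_9 axpir_v12_10 axpir_v12_11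
  axpir_v12_0' axpir_v12_1' axpir_v12_2' axpir_v12_3' axpir_v12_4' axpir_v12_5'
  axpir_v12_6' axpir_v12_7' axpir_v12_8' axpir_v12_9' axpir_v12_10' axpir_v12_11'
  axpir_v4_0 axpir_v4_1 axpir_v4_2 axpir_v4_3
  axpir_v4_0' axpir_v4_1' axpir_v4_2' axpir_v4_3'
  axpir_v2_0 axpir_v2_1 axpir_v2_0' axpir_v2_1'

def noiseEquiv (F : Type*) [Field F] (a b : Fin 4 → F) :
    ((Fin 2 → Fin 4 → F) × (Fin 2 → Fin 4 → F)) ≃ ((Fin 12 → F) × (Fin 4 → F)) where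
  toFun N := (store12 F a b N, ![N.1 1 1, N.1 1 3, N.2 1 2, N.2 1 0])
  invFun p :=
    (![![p.1 0 - a 0, p.1 4 - a 1 - b 1 - p.2 0, p.1 1 - a 2, p.1 5 - a 3 - b 3 - p.2 1],
       ![p.1 2 - b 0, p.2 0, p.1 3 - b 2, p.2 1]],
     ![![p.1 10 - a 0 - b 2 - p.2 2, p.1 6 - a 1, p.1 11 - a 2 - b 0 - p.2 3, p.1 7 - a 3],
       ![p.2 3, p.1 8 - b 1, p.2 2, p.1 9 - b 3]])
  left_inv N := by
    refine Prod.ext ?_ ?_ <;> funext i j <;> fin_cases i <;> fin_cases j <;>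
      simp [store12] <;> ring
  right_inv p := by
    refine Prod.ext ?_ ?_ <;> funext i <;> fin_cases i <;> simp [store12] <;> ring

/-- Security of the communicating pair `{1,2}` in the `N = 4`, `K = 2` A-XPIR
scheme over a finite field `F`: for every message assignment `(a, b)`, the joint
storage map from the noise space `F^16` to `F^12` is surjective with all fibers
of size `|F|⁴`, and the pushforward of the uniform distribution on the noise
under it is the uniform distribution on `F^12`; so the joint distribution of
`(S₁, S₂)` is the same for all messages, i.e., the communicating pair `{1,2}`
learns nothing about the messages. -/
theorem servers12_storage_secure (F : Type*) [Field F] [Fintype F]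
    (a b : Fin 4 → F) :
    Function.Surjective (store12 F a b) ∧
    (∀ y : Fin 12 → F,
      Nat.card {N : (Fin 2 → Fin 4 → F) × (Fin 2 → Fin 4 → F) //
        store12 F a b N = y} = Fintype.card F ^ 4) ∧
    PMF.map (store12 F a b)
        (PMF.uniformOfFintype ((Fin 2 → Fin 4 → F) × (Fin 2 → Fin 4 → F))) =
      PMF.uniformOfFintype (Fin 12 → F) := by
  classical
  set e := noiseEquiv F a b with he
  have hfst : ∀ N, (e N).1 = store12 F a b N := fun N => rfl
  have hsurj : Function.Surjective (store12 F a b) := by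
    intro y
    obtain ⟨N, hN⟩ := e.surjective (y, 0)
    exact ⟨N, (hfst N).symm.trans (congrArg Prod.fst hN)⟩
  have fibEquiv : ∀ y : Fin 12 → F,
      {N : (Fin 2 → Fin 4 → F) × (Fin 2 → Fin 4 → F) // store12 F a b N = y}
        ≃ (Fin 4 → F) := by
    intro y
    refine
      { toFun := fun N => (e N.1).2
        invFun := fun t => ⟨e.symm (y, t), ?_⟩
        left_inv := fun N => Subtype.ext ?_
        right_inv := fun t => ?_ }
    · rw [← hfst, e.apply_symm_apply]
    · have h1 : ((y, (e N.1).2) : (Fin 12 → F) × (Fin 4 → F)) = e N.1 :=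
        Prod.ext (N.2.symm.trans (hfst N.1).symm) rfl
      show e.symm (y, (e N.1).2) = N.1
      rw [h1, e.symm_apply_apply]
    · show (e (e.symm (y, t))).2 = t
      rw [e.apply_symm_apply]
  have hfib : ∀ y : Fin 12 → F,
      Nat.card {N : (Fin 2 → Fin 4 → F) × (Fin 2 → Fin 4 → F) //
        store12 F a b N = y} = Fintype.card F ^ 4 := by
    intro y
    rw [Nat.card_congr (fibEquiv y)]
    simp [Nat.card_eq_fintype_card]
  refine ⟨hsurj, hfib, ?_⟩
  have q0 : (0:ℕ) < Fintype.card F := Fintype.card_pos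
  have hq0 : ((Fintype.card F : ℝ≥0∞)) ≠ 0 := Nat.cast_ne_zero.mpr q0.ne'
  have hqt : ((Fintype.card F : ℝ≥0∞)) ≠ ⊤ := by simp
  have hcardN : Fintype.card ((Fin 2 → Fin 4 → F) × (Fin 2 → Fin 4 → F))
      = Fintype.card F ^ 16 := by
    simp [Fintype.card_fun]; ring
  have hcardY : Fintype.card (Fin 12 → F) = Fintype.card F ^ 12 := by
    simp [Fintype.card_fun]
  ext y
  rw [PMF.map_apply, PMF.uniformOfFintype_apply, tsum_fintype]
  simp only [PMF.uniformOfFintype_apply]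
  rw [← Finset.sum_filter, Finset.sum_const, nsmul_eq_mul]
  have hfc : (Finset.univ.filter (fun N => y = store12 F a b N)).card
      = Fintype.card F ^ 4 := by
    rw [← Fintype.card_subtype]
    rw [← hfib y, Nat.card_eq_fintype_card]
    exact Fintype.card_congr (Equiv.subtypeEquivRight fun N => eq_comm)
  rw [hfc, hcardN, hcardY]
  have h16 : (Fintype.card F : ℝ≥0∞) ^ 16
      = (Fintype.card F : ℝ≥0∞) ^ 12 * (Fintype.card F : ℝ≥0∞) ^ 4 := by
    rw [← pow_add]
  push_cast
  rw [h16, ENNReal.mul_inv (Or.inl (pow_ne_zero _ hq0)) (Or.inl (ENNReal.pow_ne_top hqt)),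
    mul_comm ((Fintype.card F : ℝ≥0∞) ^ 12)⁻¹, ← mul_assoc,
    mul_comm ((Fintype.card F : ℝ≥0∞) ^ 4),
    ENNReal.inv_mul_cancel (pow_ne_zero _ hq0) (ENNReal.pow_ne_top hqt), one_mul]
end
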